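/- arXiv:1211.2198 — 2 statements merged into one kernel-verified Lean document; each statement's English description precedes it below -/
import Mathlib

section
/- Piecewise constancy of the k-coverage probability (Theorem 3). Fix a perfect square n, p ∈ (0,1), and a positive integer k. Then the function r_s ↦ p_cov(n,p,r_s,k) is a nondecreasing, right-continuous, piecewise constant function of the sensing radius r_s with at most 2^n points of discontinuity: there exist 0 = r_0 < r_1 < ... < r_m with m ≤ 2^n and constants c_1, ..., c_m, c_{m+1} such that p_cov(n,p,r_s,k) = c_i for all r_s ∈ [r_{i−1}, r_i) (1 ≤ i ≤ m) and p_cov(n,p,r_s,k) = c_{m+1} for all r_s ≥ r_m. -/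
open MeasureTheory Metric Finset

noncomputable section

/-- Points of the plane with the Euclidean metric. -/
abbrev Pt : Type := EuclideanSpace ℝ (Fin 2)

/-- The point `(x, y)` of the plane. -/
def pt (x y : ℝ) : Pt := (WithLp.equiv 2 (Fin 2 → ℝ)).symm ![x, y]

/-- The closed unit square `S₀ = [-1/2, 1/2]²` centered at the origin. -/
def S0 : Set Pt := {X | X 0 ∈ Set.Icc (-(1:ℝ)/2) (1/2) ∧ X 1 ∈ Set.Icc (-(1:ℝ)/2) (1/2)}

/-- Point `(i, j)` of the `√n × √n` sensor grid (`n = s²`) with spacing `1/s` inside `S₀`. -/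
def gridPt (s : ℕ) (ij : Fin s × Fin s) : Pt :=
  pt (((ij.1 : ℝ) + 1/2) / s - 1/2) (((ij.2 : ℝ) + 1/2) / s - 1/2)

open Classical in
/-- Probability that the random set of active sensors satisfies `E`, where each of the
`s × s` grid sensors is active independently with probability `p`. -/
def gridProb (s : ℕ) (p : ℝ) (E : Finset (Fin s × Fin s) → Prop) : ℝ :=
  ∑ A : Finset (Fin s × Fin s), if E A then p ^ A.card * (1 - p) ^ Aᶜ.card else 0

open Classical in
/-- The point `u` is within Euclidean distance `r` of at least `k` active sensors
(`A` is the set of active sensors). -/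
def coveredBy (s : ℕ) (A : Finset (Fin s × Fin s)) (r : ℝ) (k : ℕ) (u : Pt) : Prop :=
  k ≤ (A.filter fun ij => dist (gridPt s ij) u ≤ r).card

/-- `k`-coverage probability of the unreliable sensor grid: the probability that every
point of `S₀` is within distance `r` of at least `k` active sensors. -/
def pcovGrid (s : ℕ) (p r : ℝ) (k : ℕ) : ℝ :=
  gridProb s p fun A => ∀ u ∈ S0, coveredBy s A r k u

open Classical in
/-- `N(r, X)`: number of grid points within Euclidean distance `r` of the point `X`. -/
def Ngrid (s : ℕ) (r : ℝ) (X : Pt) : ℕ :=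
  (Finset.univ.filter fun ij : Fin s × Fin s => dist (gridPt s ij) X ≤ r).card

/-!
The coverage probability is a sum, over the active sets `A`, of the weight of `A` times the
indicator of the set of radii at which `A` `k`-covers `S₀`. That set is an upper set, and it is
closed because for each point `u` it is a finite union of finite intersections of rays
`[dist (gridPt s ij) u, ∞)`. Hence it is empty or a ray `[t_A, ∞)` with `t_A ≥ 0`, so `p_cov` is a
nondecreasing step function whose jumps lie among the at most `2^n` thresholds `t_A`.
-/

def JumpsOnlyAt {α β : Type*} [Preorder α] (f : α → β) (R : Set α) : Prop :=
  ∀ ⦃y x⦄, y ≤ x → Disjoint R (Set.Ioc y x) → f x = f y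

namespace JumpsOnlyAt

variable {α β : Type*} [LinearOrder α] {f : α → β}

theorem mono {R R' : Set α} (hf : JumpsOnlyAt f R) (hRR' : R ⊆ R') : JumpsOnlyAt f R' :=
  fun _ _ hyx hdisj => hf hyx (hdisj.mono_left hRR')

variable {R : Finset α} {m : ℕ}

theorem eq_of_mem_Ico (hf : JumpsOnlyAt f R) (hm : #R = m + 1) (i : Fin m) {x : α}
    (hx : x ∈ Set.Ico (R.orderEmbOfFin hm i.castSucc) (R.orderEmbOfFin hm i.succ)) :
    f x = f (R.orderEmbOfFin hm i.castSucc) := by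
  refine hf hx.1 (Set.disjoint_left.2 ?_)
  intro t ht ⟨hit, htx⟩
  obtain ⟨j, rfl⟩ : t ∈ Set.range (R.orderEmbOfFin hm) := by simpa using ht
  have hj : j < i.succ := (R.orderEmbOfFin hm).lt_iff_lt.1 (htx.trans_lt hx.2)
  exact hit.not_ge ((R.orderEmbOfFin hm).le_iff_le.2 (Fin.le_castSucc_iff.2 hj))

theorem eq_of_last_le (hf : JumpsOnlyAt f R) (hm : #R = m + 1) {x : α}
    (hx : R.orderEmbOfFin hm (Fin.last m) ≤ x) :
    f x = f (R.orderEmbOfFin hm (Fin.last m)) := by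
  refine hf hx (Set.disjoint_left.2 ?_)
  intro t ht ⟨hlast, _⟩
  obtain ⟨j, rfl⟩ : t ∈ Set.range (R.orderEmbOfFin hm) := by simpa using ht
  exact hlast.not_ge ((R.orderEmbOfFin hm).le_iff_le.2 (Fin.le_last j))

end JumpsOnlyAt

theorem isClosed_setOf_le_card_filter_le {ι α : Type*} [LinearOrder α] [TopologicalSpace α]
    [ClosedIciTopology α] (A : Finset ι) (d : ι → α) (k : ℕ) :
    IsClosed {r | k ≤ #{i ∈ A | d i ≤ r}} := by
  have hunion : {r | k ≤ #{i ∈ A | d i ≤ r}} = ⋃ B ∈ A.powersetCard k, ⋂ i ∈ B, Set.Ici (d i) := by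
    ext r
    simp only [Set.mem_ofPred_eq, Set.mem_iUnion, Set.mem_iInter, Set.mem_Ici, mem_powersetCard,
      exists_prop]
    constructor
    · intro hk
      obtain ⟨B, hB, hBk⟩ := exists_subset_card_eq hk
      exact ⟨B, ⟨hB.trans (filter_subset _ _), hBk⟩, fun i hi => (mem_filter.1 (hB hi)).2⟩
    · rintro ⟨B, ⟨hBA, rfl⟩, hBr⟩
      exact card_le_card fun i hi => mem_filter.2 ⟨hBA hi, hBr i hi⟩
  rw [hunion]
  exact isClosed_biUnion_finset fun B _ => isClosed_biInter fun i _ => isClosed_Ici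

theorem IsUpperSet.eq_Ici_csInf {α : Type*} [ConditionallyCompleteLinearOrder α]
    [TopologicalSpace α] [OrderTopology α] {s : Set α} (hs : IsUpperSet s) (hne : s.Nonempty)
    (hbdd : BddBelow s) (hcl : IsClosed s) : s = Set.Ici (sInf s) :=
  hs.upperClosure.symm.trans (upperClosure_eq_Ici_csInf hne hbdd hcl)

section gridProb

variable {s : ℕ} {p : ℝ} {E E' : Finset (Fin s × Fin s) → Prop}

theorem gridProb_congr (h : ∀ A, E A ↔ E' A) : gridProb s p E = gridProb s p E' :=
  congrArg (gridProb s p) (funext fun A => propext (h A))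

theorem gridProb_mono (hp : p ∈ Set.Icc (0 : ℝ) 1) (h : ∀ A, E A → E' A) :
    gridProb s p E ≤ gridProb s p E' := by
  refine sum_le_sum fun A _ => ?_
  have hweight : 0 ≤ p ^ #A * (1 - p) ^ #Aᶜ :=
    mul_nonneg (pow_nonneg hp.1 _) (pow_nonneg (sub_nonneg.2 hp.2) _)
  split_ifs with hE hE' hE'
  exacts [le_rfl, absurd (h A hE) hE', hweight, le_rfl]

end gridProb

def coverRadii (s : ℕ) (A : Finset (Fin s × Fin s)) (k : ℕ) : Set ℝ :=
  {r | ∀ u ∈ S0, coveredBy s A r k u}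

/-- When `A` never `k`-covers `S₀` this is `sInf ∅ = 0`, a harmless spurious breakpoint. -/
def coverThreshold (s : ℕ) (A : Finset (Fin s × Fin s)) (k : ℕ) : ℝ :=
  sInf (coverRadii s A k)

section coverRadii

variable {s : ℕ} {A : Finset (Fin s × Fin s)} {k : ℕ}

theorem isUpperSet_coverRadii : IsUpperSet (coverRadii s A k) := by
  intro x y hxy hx u hu
  refine (hx u hu).trans (card_le_card fun ij hij => ?_)
  rw [mem_filter] at hij ⊢
  exact ⟨hij.1, hij.2.trans hxy⟩

theorem isClosed_coverRadii : IsClosed (coverRadii s A k) := by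
  have hinter : coverRadii s A k = ⋂ u ∈ S0, {r | coveredBy s A r k u} := by
    ext; simp only [coverRadii, Set.mem_ofPred_eq, Set.mem_iInter]
  rw [hinter]
  exact isClosed_biInter fun u _ => isClosed_setOf_le_card_filter_le A _ k

theorem nonneg_of_coveredBy {r : ℝ} {u : Pt} (hk : 0 < k) (h : coveredBy s A r k u) : 0 ≤ r := by
  obtain ⟨ij, hij⟩ := card_pos.1 (hk.trans_le h)
  exact dist_nonneg.trans (mem_filter.1 hij).2

theorem pt_zero_mem_S0 : pt 0 0 ∈ S0 := by
  norm_num [S0, pt]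

theorem coverRadii_subset_Ici (hk : 0 < k) : coverRadii s A k ⊆ Set.Ici 0 :=
  fun _ hr => nonneg_of_coveredBy hk (hr _ pt_zero_mem_S0)

theorem coverThreshold_nonneg (hk : 0 < k) : 0 ≤ coverThreshold s A k :=
  Real.sInf_nonneg fun _ hr => coverRadii_subset_Ici hk hr

theorem mem_coverRadii_iff (hk : 0 < k) {r : ℝ} :
    r ∈ coverRadii s A k ↔ (coverRadii s A k).Nonempty ∧ coverThreshold s A k ≤ r := by
  refine ⟨fun hr => ⟨⟨r, hr⟩, csInf_le ⟨0, coverRadii_subset_Ici hk⟩ hr⟩, fun ⟨hne, hr⟩ => ?_⟩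
  rw [isUpperSet_coverRadii.eq_Ici_csInf hne ⟨0, coverRadii_subset_Ici hk⟩ isClosed_coverRadii]
  exact hr

end coverRadii

theorem monotone_pcovGrid (s : ℕ) {p : ℝ} (hp : p ∈ Set.Icc (0 : ℝ) 1) (k : ℕ) :
    Monotone fun r => pcovGrid s p r k :=
  fun _ _ hxy => gridProb_mono hp fun _ hx => isUpperSet_coverRadii hxy hx

theorem jumpsOnlyAt_pcovGrid (s : ℕ) (p : ℝ) {k : ℕ} (hk : 0 < k) :
    JumpsOnlyAt (fun r => pcovGrid s p r k) (Set.range fun A => coverThreshold s A k) := by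
  intro y x hyx hdisj
  refine gridProb_congr fun A => ?_
  change x ∈ coverRadii s A k ↔ y ∈ coverRadii s A k
  rw [mem_coverRadii_iff hk, mem_coverRadii_iff hk]
  have hA : coverThreshold s A k ∉ Set.Ioc y x := Set.disjoint_left.1 hdisj ⟨A, rfl⟩
  exact and_congr_right fun _ =>
    ⟨fun htx => le_of_not_gt fun hyt => hA ⟨hyt, htx⟩, fun hty => hty.trans hyx⟩

theorem piecewise_constant_coverage_general
    (s : ℕ) (p : ℝ) (hp : p ∈ Set.Ioo (0:ℝ) 1) (k : ℕ) (hk : 0 < k) :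
    Monotone (fun rs : ℝ => pcovGrid s p rs k) ∧
    ∃ m : ℕ, m ≤ 2 ^ (s ^ 2) ∧
      ∃ r : Fin (m + 1) → ℝ, ∃ c : Fin (m + 1) → ℝ,
        r 0 = 0 ∧ StrictMono r ∧
        (∀ i : Fin m, ∀ x ∈ Set.Ico (r i.castSucc) (r i.succ),
          pcovGrid s p x k = c i.castSucc) ∧
        (∀ x : ℝ, r (Fin.last m) ≤ x → pcovGrid s p x k = c (Fin.last m)) := by
  refine ⟨monotone_pcovGrid s (Set.Ioo_subset_Icc_self hp) k, ?_⟩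
  set R : Finset ℝ := insert 0 (univ.image fun A => coverThreshold s A k)
  have hcard : #R ≤ 2 ^ (s ^ 2) + 1 := by
    refine (card_insert_le _ _).trans (Nat.add_le_add_right (card_image_le.trans_eq ?_) 1)
    simp [sq]
  have hm : #R = #R - 1 + 1 := (Nat.sub_add_cancel (card_pos.2 ⟨0, mem_insert_self _ _⟩)).symm
  set e := R.orderEmbOfFin hm
  have hjumps : JumpsOnlyAt (fun r => pcovGrid s p r k) R :=
    (jumpsOnlyAt_pcovGrid s p hk).mono (by rintro _ ⟨A, rfl⟩; simp [R])
  have hR : ∀ t ∈ R, 0 ≤ t := by simpa [R] using fun A => coverThreshold_nonneg hk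
  have he0 : e 0 = 0 := (orderEmbOfFin_zero hm (Nat.succ_pos _)).trans
    (le_antisymm (min'_le _ _ (mem_insert_self _ _)) (le_min' _ _ _ hR))
  exact ⟨#R - 1, by omega, e, fun i => pcovGrid s p (e i) k, he0, e.strictMono,
    fun i _ hx => hjumps.eq_of_mem_Ico hm i hx, fun _ hx => hjumps.eq_of_last_le hm hx⟩

/-- Theorem 3: the `k`-coverage probability of the unreliable sensor grid is a
nondecreasing, right-continuous, piecewise constant function of the sensing radius,
with at most `2^n` points of discontinuity (`n = s²`): there are
`0 = r 0 < r 1 < ... < r m` with `m ≤ 2^n` and constants `c 0, ..., c m` such that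
`p_cov = c i` on `[r i, r (i+1))` for `i < m` and `p_cov = c m` on `[r m, ∞)`. -/
theorem piecewise_constant_coverage
    (s : ℕ) (hs : 0 < s) (p : ℝ) (hp : p ∈ Set.Ioo (0:ℝ) 1) (k : ℕ) (hk : 0 < k) :
    Monotone (fun rs : ℝ => pcovGrid s p rs k) ∧
    ∃ m : ℕ, m ≤ 2 ^ (s ^ 2) ∧
      ∃ r : Fin (m + 1) → ℝ, ∃ c : Fin (m + 1) → ℝ,
        r 0 = 0 ∧ StrictMono r ∧
        (∀ i : Fin m, ∀ x ∈ Set.Ico (r i.castSucc) (r i.succ),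
          pcovGrid s p x k = c i.castSucc) ∧
        (∀ x : ℝ, r (Fin.last m) ≤ x → pcovGrid s p x k = c (Fin.last m)) :=
  piecewise_constant_coverage_general s p hp k hk

end
end

section
/- Upper bound on the coverage probability of a random sensor network (Theorem 8). Fix n ≥ 1 and a radius r with 0 < r < 1/2. Then p_cov(n,r) ≤ [1 − (1 − πr²/4)^n]^4 · [1 − (1 − πr²/2)^n]^{4⌊(1−2r)/(2r)⌋} · [1 − (1 − πr²)^n]^{⌊(1−2r)/(2r)⌋²}, where ⌊x⌋ denotes the largest integer ≤ x. -/
open MeasureTheory Metric Finset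

noncomputable section

/-- The joint distribution of `n` nodes placed i.i.d. uniformly on `S₀`. -/
def μunif (n : ℕ) : Measure (Fin n → Pt) := Measure.pi fun _ => volume.restrict S0

/-- `ν(F)`: the area (Lebesgue measure) of `F ∩ S₀`. -/
def nu (F : Set Pt) : ℝ := (volume (F ∩ S0)).toReal

/-- Coverage probability of the random network `g(n, r)`. -/
def pcovRand (n : ℕ) (r : ℝ) : ℝ :=
  (μunif n {ω | ∀ u ∈ S0, ∃ i, dist (ω i) u ≤ r}).toReal

/-- The Bernoulli(p) measure on Bool. -/
def bern (p : ℝ) : Measure Bool :=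
  ENNReal.ofReal p • Measure.dirac true + ENNReal.ofReal (1 - p) • Measure.dirac false

/-- Sample space measure for `g(n, r, p)`: node positions are i.i.d. uniform on `S₀`,
and each unordered pair of nodes carries an independent Bernoulli(p) indicator. -/
def μgraph (n : ℕ) (p : ℝ) : Measure ((Fin n → Pt) × (Sym2 (Fin n) → Bool)) :=
  (Measure.pi fun _ : Fin n => volume.restrict S0).prod
    (Measure.pi fun _ : Sym2 (Fin n) => bern p)

/-- Adjacency in `g(n, r, p)`: nodes `i ≠ j` are joined iff they are within distance `r`
and the pair's Bernoulli indicator equals `true`. -/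
def adj (n : ℕ) (r : ℝ) (ω : (Fin n → Pt) × (Sym2 (Fin n) → Bool)) (i j : Fin n) : Prop :=
  i ≠ j ∧ dist (ω.1 i) (ω.1 j) ≤ r ∧ ω.2 s(i, j) = true

/-- Probability that `g(n, r, p)` is disconnected. -/
def pdisc (n : ℕ) (r p : ℝ) : ℝ :=
  (μgraph n p {ω | ¬ ∀ i j : Fin n, Relation.ReflTransGen (adj n r ω) i j}).toReal

/-!
Put a grid of `(m + 2)²` points with spacing `1 / (m + 1) ≥ 2r` on `S₀`, boundary included,
where `m = ⌊(1 - 2r) / (2r)⌋₊`. The open balls of radius `r` about the grid points are pairwise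
disjoint, and on a covering configuration each of them contains a node, except on the null event
that a node lies on one of their boundary circles.

For disjoint cells the occupancy events are negatively correlated: conditioning on the first node
gives a recursion in `n` that preserves the bound `∏ₖ (1 - (1 - ν Cₖ) ^ n)`. Finally, by
reflection symmetry, a ball about a corner (edge, interior) grid point meets `S₀` in at most a
quarter (a half, all) of its area `πr²`; there are `4`, `4m` and `m²` such points.
-/

open Function

lemma one_sub_one_sub_pow_nonneg {p : ℝ} (h0 : 0 ≤ p) (h1 : p ≤ 1) (n : ℕ) :
    0 ≤ 1 - (1 - p) ^ n :=
  sub_nonneg.2 <| pow_le_one₀ (sub_nonneg.2 h1) (sub_le_self _ h0)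

lemma one_sub_one_sub_pow_le_of_le {p q : ℝ} (hpq : p ≤ q) (hq : q ≤ 1) (n : ℕ) :
    1 - (1 - p) ^ n ≤ 1 - (1 - q) ^ n :=
  sub_le_sub_left (pow_le_pow_left₀ (sub_nonneg.2 hq) (sub_le_sub_left hpq 1) n) 1

lemma Finset.prod_add_sum_mul_prod_erase_le_prod_add {ι R : Type*} [CommSemiring R]
    [PartialOrder R] [IsOrderedRing R] [DecidableEq ι] (s : Finset ι) {g x : ι → R}
    (hg : ∀ i ∈ s, 0 ≤ g i) (hx : ∀ i ∈ s, 0 ≤ x i) :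
    ∏ i ∈ s, g i + ∑ i ∈ s, x i * ∏ j ∈ s.erase i, g j ≤ ∏ i ∈ s, (g i + x i) := by
  induction s using Finset.induction_on with
  | empty => simp
  | insert a s ha ih =>
    have hg' : ∀ i ∈ s, 0 ≤ g i := fun i hi => hg i (mem_insert_of_mem hi)
    have hx' : ∀ i ∈ s, 0 ≤ x i := fun i hi => hx i (mem_insert_of_mem hi)
    have herase : ∀ i ∈ s, ∏ j ∈ (insert a s).erase i, g j = g a * ∏ j ∈ s.erase i, g j :=
      fun i hi => by
        rw [erase_insert_of_ne (ne_of_mem_of_not_mem hi ha).symm, prod_insert (by simp [ha])]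
    rw [prod_insert ha, sum_insert ha, erase_insert ha, prod_insert ha,
      sum_congr rfl fun i hi => by rw [herase i hi]]
    have hprod : ∏ i ∈ s, g i ≤ ∏ i ∈ s, (g i + x i) :=
      prod_le_prod hg' fun i hi => le_add_of_nonneg_right (hx' i hi)
    have ha' := hg a (mem_insert_self a s)
    have hxa := hx a (mem_insert_self a s)
    calc g a * ∏ i ∈ s, g i +
          (x a * ∏ i ∈ s, g i + ∑ i ∈ s, x i * (g a * ∏ j ∈ s.erase i, g j))
        = g a * (∏ i ∈ s, g i + ∑ i ∈ s, x i * ∏ j ∈ s.erase i, g j) +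
          x a * ∏ i ∈ s, g i := by
          rw [mul_add, mul_sum]; simp_rw [mul_left_comm (g a)]; ring
      _ ≤ g a * ∏ i ∈ s, (g i + x i) + x a * ∏ i ∈ s, (g i + x i) := by
          gcongr
          exact ih hg' hx'
      _ = (g a + x a) * ∏ i ∈ s, (g i + x i) := by ring

lemma sum_mul_prod_erase_add_le_prod_one_sub_pow_succ {ι : Type*} [DecidableEq ι]
    (K : Finset ι) {p : ι → ℝ} (hp0 : ∀ k, 0 ≤ p k) (hp1 : ∀ k, p k ≤ 1) (n : ℕ) :
    ∑ k ∈ K, p k * ∏ l ∈ K.erase k, (1 - (1 - p l) ^ n) +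
        (1 - ∑ k ∈ K, p k) * ∏ k ∈ K, (1 - (1 - p k) ^ n) ≤
      ∏ k ∈ K, (1 - (1 - p k) ^ (n + 1)) := by
  set g : ι → ℝ := fun k => 1 - (1 - p k) ^ n
  have hprod_erase : ∀ k ∈ K, p k * ∏ l ∈ K, g l = p k * g k * ∏ l ∈ K.erase k, g l :=
    fun k hk => by rw [← mul_prod_erase K g hk, mul_assoc]
  calc _ = ∏ k ∈ K, g k + ∑ k ∈ K, p k * (1 - g k) * ∏ l ∈ K.erase k, g l := by
        rw [sub_mul, one_mul, sum_mul, add_sub, add_comm, add_sub_assoc, ← sum_sub_distrib]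
        congr 1
        refine sum_congr rfl fun k hk => ?_
        rw [hprod_erase k hk]
        ring
    _ ≤ ∏ k ∈ K, (g k + p k * (1 - g k)) :=
        prod_add_sum_mul_prod_erase_le_prod_add K
          (fun k _ => one_sub_one_sub_pow_nonneg (hp0 k) (hp1 k) n) fun k _ =>
            mul_nonneg (hp0 k) (by
              simp only [g, sub_sub_cancel]; exact pow_nonneg (sub_nonneg.2 (hp1 k)) n)
    _ = ∏ k ∈ K, (1 - (1 - p k) ^ (n + 1)) :=
        prod_congr rfl fun k _ => by simp only [g]; ring

section Occupancy

variable {α ι : Type*} {C : ι → Set α}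

def cellsHit (C : ι → Set α) (K : Finset ι) (n : ℕ) : Set (Fin n → α) :=
  {ω | ∀ k ∈ K, ∃ i, ω i ∈ C k}

lemma cons_mem_cellsHit_of_mem [DecidableEq ι] (hdisj : Pairwise (Disjoint on C))
    {K : Finset ι} {n : ℕ} {k : ι} {x : α} (hx : x ∈ C k) (ω : Fin n → α) :
    Fin.cons x ω ∈ cellsHit C K (n + 1) ↔ ω ∈ cellsHit C (K.erase k) n := by
  simp only [cellsHit, Set.mem_ofPred_eq, Finset.mem_erase, Fin.exists_fin_succ, Fin.cons_zero,
    Fin.cons_succ]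
  refine forall_congr' fun l => ⟨fun h ⟨hlk, hl⟩ => (h hl).resolve_left fun hxl => ?_,
    fun h hl => ?_⟩
  · exact (hdisj hlk).ne_of_mem hxl hx rfl
  · rcases eq_or_ne l k with rfl | hlk
    · exact .inl hx
    · exact .inr (h ⟨hlk, hl⟩)

lemma cons_mem_cellsHit_of_notMem {K : Finset ι} {n : ℕ} {x : α} (hx : ∀ k ∈ K, x ∉ C k)
    (ω : Fin n → α) : Fin.cons x ω ∈ cellsHit C K (n + 1) ↔ ω ∈ cellsHit C K n := by
  simp only [cellsHit, Set.mem_ofPred_eq, Fin.exists_fin_succ, Fin.cons_zero, Fin.cons_succ]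
  exact forall₂_congr fun k hk => or_iff_right (hx k hk)

variable [MeasurableSpace α]

lemma measurableSet_cellsHit (hC : ∀ k, MeasurableSet (C k)) (K : Finset ι) (n : ℕ) :
    MeasurableSet (cellsHit C K n) := by
  simp only [cellsHit, Set.ofPred_forall, Set.ofPred_exists]
  exact .biInter K.countable_toSet fun k _ => .iUnion fun i => measurable_pi_apply i (hC k)

variable (μ : Measure α)

lemma pi_cellsHit_succ [SigmaFinite μ] [DecidableEq ι] (hC : ∀ k, MeasurableSet (C k))
    (hdisj : Pairwise (Disjoint on C)) (K : Finset ι) (n : ℕ) :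
    Measure.pi (fun _ : Fin (n + 1) => μ) (cellsHit C K (n + 1)) =
      ∑ k ∈ K, μ (C k) * Measure.pi (fun _ : Fin n => μ) (cellsHit C (K.erase k) n) +
        μ (⋃ k ∈ K, C k)ᶜ * Measure.pi (fun _ : Fin n => μ) (cellsHit C K n) := by
  have hU : MeasurableSet (⋃ k ∈ K, C k) := K.measurableSet_biUnion fun k _ => hC k
  have hsection : ∀ x, Measure.pi (fun _ : Fin n => μ) (Prod.mk x ⁻¹'
      ((MeasurableEquiv.piFinSuccAbove (fun _ => α) 0).symm ⁻¹' cellsHit C K (n + 1))) =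
      ∑ k ∈ K, (C k).indicator
          (fun _ => Measure.pi (fun _ : Fin n => μ) (cellsHit C (K.erase k) n)) x +
        (⋃ k ∈ K, C k)ᶜ.indicator
          (fun _ => Measure.pi (fun _ : Fin n => μ) (cellsHit C K n)) x := by
    intro x
    have hcons : Prod.mk x ⁻¹' ((MeasurableEquiv.piFinSuccAbove (fun _ => α) 0).symm ⁻¹'
        cellsHit C K (n + 1)) =
        (fun ω : Fin n → α => (Fin.cons x ω : Fin (n + 1) → α)) ⁻¹' cellsHit C K (n + 1) := by
      ext ω; simp [MeasurableEquiv.piFinSuccAbove, Fin.consEquiv]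
    rw [hcons]
    by_cases hx : ∃ k ∈ K, x ∈ C k
    · obtain ⟨k, hk, hxk⟩ := hx
      rw [Finset.sum_eq_single_of_mem k hk fun l _ hlk => Set.indicator_of_notMem
          (fun hxl => (hdisj hlk).ne_of_mem hxl hxk rfl) _,
        Set.indicator_of_mem hxk, Set.indicator_of_notMem (by simpa using ⟨k, hk, hxk⟩), add_zero]
      exact congrArg _ (Set.ext (cons_mem_cellsHit_of_mem hdisj hxk))
    · push Not at hx
      rw [Finset.sum_eq_zero fun k hk => Set.indicator_of_notMem (hx k hk) _,
        Set.indicator_of_mem (by simpa using hx), zero_add]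
      exact congrArg _ (Set.ext (cons_mem_cellsHit_of_notMem hx))
  rw [← (measurePreserving_piFinSuccAbove (fun _ : Fin (n + 1) => μ) 0).symm.measure_preimage
      (measurableSet_cellsHit hC K (n + 1)).nullMeasurableSet,
    Measure.prod_apply ((MeasurableEquiv.measurable _) (measurableSet_cellsHit hC K (n + 1))),
    lintegral_congr hsection, lintegral_add_right _ (measurable_const.indicator hU.compl),
    lintegral_finsetSum _ fun k _ => measurable_const.indicator (hC k),
    lintegral_indicator_const hU.compl]
  simp_rw [lintegral_indicator_const (hC _), mul_comm]

variable [IsProbabilityMeasure μ]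

lemma measureReal_pi_cellsHit_succ [DecidableEq ι] (hC : ∀ k, MeasurableSet (C k))
    (hdisj : Pairwise (Disjoint on C)) (K : Finset ι) (n : ℕ) :
    (Measure.pi fun _ : Fin (n + 1) => μ).real (cellsHit C K (n + 1)) =
      ∑ k ∈ K, μ.real (C k) * (Measure.pi fun _ : Fin n => μ).real (cellsHit C (K.erase k) n) +
        (1 - ∑ k ∈ K, μ.real (C k)) * (Measure.pi fun _ : Fin n => μ).real (cellsHit C K n) := by
  have hfin : ∀ k ∈ K,
      μ (C k) * Measure.pi (fun _ : Fin n => μ) (cellsHit C (K.erase k) n) ≠ ⊤ :=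
    fun k _ => ENNReal.mul_ne_top (measure_ne_top _ _) (measure_ne_top _ _)
  rw [← measureReal_biUnion_finset (fun k _ l _ hkl => hdisj hkl) fun k _ => hC k,
    ← probReal_univ (μ := μ), ← measureReal_compl (K.measurableSet_biUnion fun k _ => hC k)]
  simp only [measureReal_def, pi_cellsHit_succ μ hC hdisj K n]
  rw [ENNReal.toReal_add (ENNReal.sum_ne_top.2 hfin) (by finiteness), ENNReal.toReal_sum hfin]
  simp only [ENNReal.toReal_mul]

theorem measureReal_pi_cellsHit_le (hC : ∀ k, MeasurableSet (C k))
    (hdisj : Pairwise (Disjoint on C)) (K : Finset ι) (n : ℕ) :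
    (Measure.pi fun _ : Fin n => μ).real (cellsHit C K n) ≤
      ∏ k ∈ K, (1 - (1 - μ.real (C k)) ^ n) := by
  classical
  induction n generalizing K with
  | zero =>
    rcases K.eq_empty_or_nonempty with rfl | ⟨k, hk⟩
    · simp
    · have hempty : cellsHit C K 0 = ∅ := Set.eq_empty_of_forall_notMem fun ω hω => by
        obtain ⟨i, -⟩ := hω k hk
        exact i.elim0
      rw [hempty, measureReal_empty, prod_eq_zero hk (by simp)]
  | succ n ih =>
    have hsum : ∑ k ∈ K, μ.real (C k) ≤ 1 :=
      (measureReal_biUnion_finset (fun k _ l _ hkl => hdisj hkl) fun k _ => hC k).symm.trans_le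
        measureReal_le_one
    rw [measureReal_pi_cellsHit_succ μ hC hdisj K n]
    calc _ ≤ ∑ k ∈ K, μ.real (C k) * ∏ l ∈ K.erase k, (1 - (1 - μ.real (C l)) ^ n) +
          (1 - ∑ k ∈ K, μ.real (C k)) * ∏ k ∈ K, (1 - (1 - μ.real (C k)) ^ n) := by
          gcongr <;> exact ih _
      _ ≤ _ := sum_mul_prod_erase_add_le_prod_one_sub_pow_succ K (fun _ => measureReal_nonneg)
          (fun _ => measureReal_le_one) n

end Occupancy

lemma coverage_subset_cellsHit_union {α ι : Type*} [PseudoMetricSpace α] {S : Set α}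
    {c : ι → α} {K : Finset ι} (hc : ∀ k ∈ K, c k ∈ S) (n : ℕ) (r : ℝ) :
    {ω : Fin n → α | ∀ u ∈ S, ∃ i, dist (ω i) u ≤ r} ⊆
      cellsHit (fun k => ball (c k) r) K n ∪ ⋃ i, (fun ω => ω i) ⁻¹' ⋃ k ∈ K, sphere (c k) r := by
  intro ω hω
  by_cases hsphere : ∃ i, ∃ k ∈ K, dist (ω i) (c k) = r
  · obtain ⟨i, k, hk, h⟩ := hsphere
    exact .inr (Set.mem_iUnion.2 ⟨i, Set.mem_biUnion hk h⟩)
  · push Not at hsphere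
    refine .inl fun k hk => ?_
    obtain ⟨i, hi⟩ := hω (c k) (hc k hk)
    exact ⟨i, lt_of_le_of_ne hi (hsphere i k hk)⟩

section Reflection

variable {ι : Type*} [Fintype ι]

lemma volume_setOf_apply_eq (κ : ι) (a : ℝ) :
    volume {x : EuclideanSpace ℝ ι | x κ = a} = 0 := by
  have hpre : {x : EuclideanSpace ℝ ι | x κ = a} =
      (MeasurableEquiv.toLp 2 (ι → ℝ)).symm ⁻¹' (Function.eval κ ⁻¹' {a}) := rfl
  rw [hpre, (EuclideanSpace.volume_preserving_symm_measurableEquiv_toLp ι).measure_preimage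
    ((measurable_pi_apply κ) (measurableSet_singleton a)).nullMeasurableSet, volume_pi]
  exact Measure.pi_eval_preimage_null _ Real.volume_singleton

variable [DecidableEq ι]

def reflectCoord (κ : ι) (a : ℝ) (x : EuclideanSpace ℝ ι) : EuclideanSpace ℝ ι :=
  LinearIsometryEquiv.piLpCongrRight 2
      (fun j => if j = κ then LinearIsometryEquiv.neg ℝ else LinearIsometryEquiv.refl ℝ ℝ) x +
    EuclideanSpace.single κ (2 * a)

lemma reflectCoord_apply (κ : ι) (a : ℝ) (x : EuclideanSpace ℝ ι) (j : ι) :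
    reflectCoord κ a x j = if j = κ then 2 * a - x j else x j := by
  rw [reflectCoord, PiLp.add_apply, LinearIsometryEquiv.piLpCongrRight_apply, PiLp.toLp_apply,
    PiLp.single_apply]
  split_ifs <;> simp [*, sub_eq_neg_add]

lemma reflectCoord_apply_self (κ : ι) (a : ℝ) (x : EuclideanSpace ℝ ι) :
    reflectCoord κ a x κ = 2 * a - x κ := by
  simp [reflectCoord_apply]

lemma measurePreserving_reflectCoord (κ : ι) (a : ℝ) :
    MeasurePreserving (reflectCoord κ a) :=
  (measurePreserving_add_right volume _).comp (LinearIsometryEquiv.measurePreserving _)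

lemma dist_reflectCoord (κ : ι) (a : ℝ) (x y : EuclideanSpace ℝ ι) :
    dist (reflectCoord κ a x) (reflectCoord κ a y) = dist x y := by
  rw [reflectCoord, reflectCoord, dist_add_right, LinearIsometryEquiv.dist_map]

lemma reflectCoord_self (κ : ι) (c : EuclideanSpace ℝ ι) : reflectCoord κ (c κ) c = c := by
  ext j
  rw [reflectCoord_apply]
  split_ifs with h
  · subst h; ring
  · rfl

lemma reflectCoord_preimage_ball (κ : ι) (c : EuclideanSpace ℝ ι) (r : ℝ) :
    reflectCoord κ (c κ) ⁻¹' ball c r = ball c r := by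
  ext x
  rw [Set.mem_preimage, mem_ball, mem_ball, ← dist_reflectCoord κ (c κ) x c, reflectCoord_self]

lemma reflectCoord_preimage_setOf_apply {κ j : ι} (hj : j ≠ κ) (a : ℝ) (I : Set ℝ) :
    reflectCoord κ a ⁻¹' {x | x j ∈ I} = {x | x j ∈ I} := by
  ext x
  simp [reflectCoord_apply, hj]

lemma volume_inter_halfspace_eq_half (κ : ι) (a : ℝ) {S : Set (EuclideanSpace ℝ ι)}
    (hS : MeasurableSet S) (hsym : reflectCoord κ a ⁻¹' S = S) :
    volume (S ∩ {x | a ≤ x κ}) = volume S / 2 ∧ volume (S ∩ {x | x κ ≤ a}) = volume S / 2 := by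
  have hcoord : Measurable fun x : EuclideanSpace ℝ ι => x κ := by fun_prop
  have hB : MeasurableSet (S ∩ {x | x κ ≤ a}) :=
    hS.inter (measurableSet_le hcoord measurable_const)
  have hswap : reflectCoord κ a ⁻¹' (S ∩ {x | x κ ≤ a}) = S ∩ {x | a ≤ x κ} := by
    ext x
    simp only [Set.preimage_inter, hsym, Set.mem_inter_iff, Set.mem_preimage, Set.mem_ofPred_eq,
      reflectCoord_apply_self]
    constructor <;> rintro ⟨hx, h⟩ <;> exact ⟨hx, by linarith⟩
  have hequal : volume (S ∩ {x | a ≤ x κ}) = volume (S ∩ {x | x κ ≤ a}) := by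
    rw [← hswap, (measurePreserving_reflectCoord κ a).measure_preimage hB.nullMeasurableSet]
  have hsplit : volume S = volume (S ∩ {x | a ≤ x κ}) + volume (S ∩ {x | x κ ≤ a}) := by
    have hunion : (S ∩ {x | a ≤ x κ}) ∪ (S ∩ {x | x κ ≤ a}) = S := by
      rw [← Set.inter_union_distrib_left, Set.inter_eq_left]
      exact fun x _ => le_total a (x κ)
    have hnull : volume ((S ∩ {x | a ≤ x κ}) ∩ (S ∩ {x | x κ ≤ a})) = 0 :=
      measure_mono_null (fun x ⟨⟨_, h₁⟩, ⟨_, h₂⟩⟩ => le_antisymm h₂ h₁)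
        (volume_setOf_apply_eq κ a)
    rw [← measure_union_add_inter _ hB, hunion, hnull, add_zero]
  have hhalf : volume (S ∩ {x | a ≤ x κ}) = volume S / 2 :=
    (ENNReal.eq_div_iff two_ne_zero ENNReal.ofNat_ne_top).2 (by rw [hsplit, ← hequal, two_mul])
  exact ⟨hhalf, hequal ▸ hhalf⟩

end Reflection

section Grid

variable {m : ℕ}

def gridCoord (m : ℕ) (i : Fin (m + 2)) : ℝ := i / (m + 1) - 1 / 2

def gridPoint (m : ℕ) (k : Fin (m + 2) × Fin (m + 2)) : Pt :=
  pt (gridCoord m k.1) (gridCoord m k.2)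

/- Along each axis, at most this fraction of a ball about a grid point with coordinate index `i`
lies in `S₀`: half of it for the two boundary indices. -/
def gridWeight (m : ℕ) (i : Fin (m + 2)) : ℝ :=
  if i = 0 ∨ i = Fin.last (m + 1) then 1 / 2 else 1

lemma gridWeight_nonneg (i : Fin (m + 2)) : 0 ≤ gridWeight m i := by
  unfold gridWeight; split_ifs <;> norm_num

lemma gridWeight_le_one (i : Fin (m + 2)) : gridWeight m i ≤ 1 := by
  unfold gridWeight; split_ifs <;> norm_num

lemma gridCoord_zero : gridCoord m 0 = -1 / 2 := by
  norm_num [gridCoord]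

lemma gridCoord_last : gridCoord m (Fin.last (m + 1)) = 1 / 2 := by
  simp only [gridCoord, Fin.val_last]
  field_simp
  push_cast
  ring

lemma gridCoord_mem_Icc (i : Fin (m + 2)) :
    gridCoord m i ∈ Set.Icc (-(1 : ℝ) / 2) (1 / 2) := by
  have hi : (i : ℝ) ≤ m + 1 := by exact_mod_cast Fin.is_le i
  have hdiv : (i : ℝ) / (m + 1) ≤ 1 := div_le_one_of_le₀ hi (by positivity)
  constructor <;> simp only [gridCoord] <;> linarith [show 0 ≤ (i : ℝ) / (m + 1) by positivity]

lemma gridPoint_mem_S0 (k : Fin (m + 2) × Fin (m + 2)) : gridPoint m k ∈ S0 :=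
  ⟨gridCoord_mem_Icc k.1, gridCoord_mem_Icc k.2⟩

lemma inv_le_abs_gridCoord_sub {i j : Fin (m + 2)} (hij : i ≠ j) :
    1 / (m + 1 : ℝ) ≤ |gridCoord m i - gridCoord m j| := by
  have hsub : gridCoord m i - gridCoord m j = ((i : ℝ) - j) / (m + 1) := by
    simp only [gridCoord]; ring
  have hone : (1 : ℝ) ≤ |(i : ℝ) - j| := by
    have : (1 : ℤ) ≤ |(i : ℤ) - j| := Int.one_le_abs (sub_ne_zero.2 (by omega))
    exact_mod_cast this
  rw [hsub, abs_div, abs_of_pos (show (0 : ℝ) < m + 1 by positivity)]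
  exact div_le_div_of_nonneg_right hone (by positivity)

lemma inv_le_dist_gridPoint {k l : Fin (m + 2) × Fin (m + 2)} (hkl : k ≠ l) :
    1 / (m + 1 : ℝ) ≤ dist (gridPoint m k) (gridPoint m l) := by
  obtain h | h : k.1 ≠ l.1 ∨ k.2 ≠ l.2 := by
    by_contra! h; exact hkl (Prod.ext h.1 h.2)
  · exact (inv_le_abs_gridCoord_sub h).trans
      (PiLp.dist_apply_le (gridPoint m k) (gridPoint m l) 0)
  · exact (inv_le_abs_gridCoord_sub h).trans
      (PiLp.dist_apply_le (gridPoint m k) (gridPoint m l) 1)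

lemma pairwise_disjoint_ball_gridPoint {r : ℝ} (hr : 2 * r ≤ 1 / (m + 1)) :
    Pairwise (Disjoint on fun k => ball (gridPoint m k) r) := fun k l hkl =>
  ball_disjoint_ball (by linarith [inv_le_dist_gridPoint hkl])

lemma prod_gridWeight {M : Type*} [CommMonoid M] (φ : ℝ → M) :
    ∏ i : Fin (m + 2), φ (gridWeight m i) = φ (1 / 2) ^ 2 * φ 1 ^ m := by
  have hfirst : gridWeight m 0 = 1 / 2 := by simp [gridWeight]
  have hlast : gridWeight m (Fin.last m).succ = 1 / 2 := by simp [gridWeight]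
  have hinner : ∀ j : Fin m, gridWeight m j.castSucc.succ = 1 := fun j =>
    if_neg <| by simp [Fin.ext_iff, j.isLt.ne]
  rw [Fin.prod_univ_succ, Fin.prod_univ_castSucc, hfirst, hlast]
  simp only [hinner, prod_const, card_univ, Fintype.card_fin]
  rw [sq]
  ac_rfl

lemma prod_gridWeight_mul_gridWeight (f : ℝ → ℝ) (a : ℝ) :
    ∏ k : Fin (m + 2) × Fin (m + 2), f (a * (gridWeight m k.1 * gridWeight m k.2)) =
      f (a / 4) ^ 4 * f (a / 2) ^ (4 * m) * f a ^ (m ^ 2) := by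
  calc ∏ k : Fin (m + 2) × Fin (m + 2), f (a * (gridWeight m k.1 * gridWeight m k.2))
      = ∏ i, (f (a * (gridWeight m i * (1 / 2))) ^ 2 * f (a * (gridWeight m i * 1)) ^ m) := by
        rw [Fintype.prod_prod_type]
        exact prod_congr rfl fun i _ => prod_gridWeight fun t => f (a * (gridWeight m i * t))
    _ = (f (a * (1 / 2 * (1 / 2))) ^ 2 * f (a * (1 * (1 / 2))) ^ m) ^ 2 *
          (f (a * (1 / 2 * 1)) ^ 2 * f (a * (1 * 1)) ^ m) ^ m := by
        rw [prod_mul_distrib, prod_pow, prod_pow, prod_gridWeight fun t => f (a * (t * (1 / 2))),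
          prod_gridWeight fun t => f (a * (t * 1))]
    _ = f (a / 4) ^ 4 * f (a / 2) ^ (4 * m) * f a ^ (m ^ 2) := by
        ring_nf

lemma pi_mul_sq_mul_gridWeight_le_one {r : ℝ} (hr0 : 0 ≤ r) (hr1 : r ≤ 1 / 2)
    (k : Fin (m + 2) × Fin (m + 2)) :
    Real.pi * r ^ 2 * (gridWeight m k.1 * gridWeight m k.2) ≤ 1 :=
  mul_le_one₀ (by nlinarith [Real.pi_lt_four, Real.pi_pos])
    (mul_nonneg (gridWeight_nonneg _) (gridWeight_nonneg _))
    (mul_le_one₀ (gridWeight_le_one _) (gridWeight_nonneg _) (gridWeight_le_one _))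

lemma two_mul_le_one_div_floor_add_one {r : ℝ} (hr0 : 0 < r) (hr1 : r < 1 / 2) :
    2 * r ≤ 1 / (⌊(1 - 2 * r) / (2 * r)⌋₊ + 1 : ℝ) := by
  have hfloor : (⌊(1 - 2 * r) / (2 * r)⌋₊ : ℝ) ≤ (1 - 2 * r) / (2 * r) :=
    Nat.floor_le (div_nonneg (by linarith) (by linarith))
  rw [le_div_iff₀ (by positivity)]
  calc 2 * r * (⌊(1 - 2 * r) / (2 * r)⌋₊ + 1 : ℝ) ≤ 2 * r * ((1 - 2 * r) / (2 * r) + 1) := by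
        gcongr
    _ = 1 := by field_simp; ring

end Grid

section Cells

variable {m : ℕ}

lemma volume_inter_slab_le {ι : Type*} [Fintype ι] [DecidableEq ι] {κ : ι}
    {S : Set (EuclideanSpace ℝ ι)} (hS : MeasurableSet S) (i : Fin (m + 2))
    (hsym : reflectCoord κ (gridCoord m i) ⁻¹' S = S) :
    volume (S ∩ {x | x κ ∈ Set.Icc (-(1 : ℝ) / 2) (1 / 2)}) ≤
      ENNReal.ofReal (gridWeight m i) * volume S := by
  obtain ⟨hge, hle⟩ := volume_inter_halfspace_eq_half κ (gridCoord m i) hS hsym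
  unfold gridWeight
  split_ifs with hi
  · have hhalf : ENNReal.ofReal (1 / 2) = 2⁻¹ := by
      rw [ENNReal.ofReal_div_of_pos two_pos]; simp
    rw [hhalf, ← ENNReal.div_eq_inv_mul]
    rcases hi with rfl | rfl
    · rw [← hge]
      exact measure_mono fun x ⟨hx, h, _⟩ => ⟨hx, gridCoord_zero.trans_le h⟩
    · rw [← hle]
      exact measure_mono fun x ⟨hx, _, h⟩ => ⟨hx, h.trans_eq gridCoord_last.symm⟩
  · rw [ENNReal.ofReal_one, one_mul]
    exact measure_mono Set.inter_subset_left

lemma volume_S0 : volume S0 = 1 := by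
  have hpre : S0 = (MeasurableEquiv.toLp 2 (Fin 2 → ℝ)).symm ⁻¹'
      Set.univ.pi fun _ => Set.Icc (-(1 : ℝ) / 2) (1 / 2) := by
    ext x
    simp only [S0, Set.mem_ofPred_eq, Set.mem_preimage, Set.mem_pi, Set.mem_univ, true_implies,
      Fin.forall_fin_two]
    rfl
  rw [hpre, (EuclideanSpace.volume_preserving_symm_measurableEquiv_toLp (Fin 2)).measure_preimage
    (MeasurableSet.univ_pi fun _ => measurableSet_Icc).nullMeasurableSet, volume_pi_pi]
  norm_num

instance : IsProbabilityMeasure (volume.restrict S0) :=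
  ⟨by rw [Measure.restrict_apply_univ, volume_S0]⟩

lemma measureReal_restrict_S0_ball_gridPoint_le {r : ℝ} (hr : 0 ≤ r)
    (k : Fin (m + 2) × Fin (m + 2)) :
    (volume.restrict S0).real (ball (gridPoint m k) r) ≤
      Real.pi * r ^ 2 * (gridWeight m k.1 * gridWeight m k.2) := by
  have hS0 : ball (gridPoint m k) r ∩ S0 = ball (gridPoint m k) r ∩
      {x : Pt | x 0 ∈ Set.Icc (-(1 : ℝ) / 2) (1 / 2)} ∩
        {x | x 1 ∈ Set.Icc (-(1 : ℝ) / 2) (1 / 2)} :=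
    (Set.inter_assoc _ _ _).symm
  have hfirst := volume_inter_slab_le (κ := (0 : Fin 2)) measurableSet_ball k.1
    (reflectCoord_preimage_ball 0 (gridPoint m k) r)
  have hslab : MeasurableSet {x : Pt | x 0 ∈ Set.Icc (-(1 : ℝ) / 2) (1 / 2)} :=
    measurableSet_Icc.preimage (by fun_prop)
  have hsecond := volume_inter_slab_le (κ := (1 : Fin 2)) (measurableSet_ball.inter hslab) k.2
    (by rw [Set.preimage_inter, reflectCoord_preimage_setOf_apply (by decide)]
        exact congrArg (· ∩ _) (reflectCoord_preimage_ball 1 (gridPoint m k) r))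
  have hbound : volume (ball (gridPoint m k) r ∩ S0) ≤
      ENNReal.ofReal (Real.pi * r ^ 2 * (gridWeight m k.1 * gridWeight m k.2)) := by
    rw [hS0]
    grw [hsecond, hfirst]
    rw [EuclideanSpace.volume_ball_fin_two, ← ENNReal.ofReal_pow hr,
      ← ENNReal.ofReal_mul (by positivity), ← ENNReal.ofReal_mul (gridWeight_nonneg _),
      ← ENNReal.ofReal_mul (gridWeight_nonneg _)]
    exact le_of_eq (by ring_nf)
  rw [measureReal_def, Measure.restrict_apply measurableSet_ball]
  exact ENNReal.toReal_le_of_le_ofReal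
    (mul_nonneg (by positivity) (mul_nonneg (gridWeight_nonneg _) (gridWeight_nonneg _))) hbound

lemma pcovRand_le_measureReal_cellsHit {ι : Type*} {c : ι → Pt} {K : Finset ι}
    (hc : ∀ k ∈ K, c k ∈ S0) (n : ℕ) (r : ℝ) :
    pcovRand n r ≤ (Measure.pi fun _ : Fin n => volume.restrict S0).real
      (cellsHit (fun k => ball (c k) r) K n) := by
  have hsphere : Measure.pi (fun _ : Fin n => volume.restrict S0)
      (⋃ i, (fun ω => ω i) ⁻¹' ⋃ k ∈ K, sphere (c k) r) = 0 :=
    measure_iUnion_null fun i => Measure.pi_eval_preimage_null _ <|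
      (measure_biUnion_null_iff K.countable_toSet).2 fun k _ => nonpos_iff_eq_zero.1 <|
        (Measure.restrict_apply_le _ _).trans_eq (Measure.addHaar_sphere _ _ _)
  change (Measure.pi fun _ : Fin n => volume.restrict S0).real
    {ω | ∀ u ∈ S0, ∃ i, dist (ω i) u ≤ r} ≤ _
  exact (measureReal_mono (coverage_subset_cellsHit_union hc n r)).trans <|
    (measureReal_union_le _ _).trans_eq (by rw [(measureReal_eq_zero_iff).2 hsphere, add_zero])

end Cells

theorem coverage_upper_bound_random_general
    (n : ℕ) (r : ℝ) (hr : r ∈ Set.Ioo (0:ℝ) (1/2)) :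
    pcovRand n r ≤
      (1 - (1 - Real.pi * r ^ 2 / 4) ^ n) ^ 4 *
      (1 - (1 - Real.pi * r ^ 2 / 2) ^ n) ^ (4 * ⌊(1 - 2*r) / (2*r)⌋₊) *
      (1 - (1 - Real.pi * r ^ 2) ^ n) ^ (⌊(1 - 2*r) / (2*r)⌋₊ ^ 2) := by
  obtain ⟨hr0, hr1⟩ := hr
  set m := ⌊(1 - 2 * r) / (2 * r)⌋₊
  calc pcovRand n r
      ≤ (Measure.pi fun _ : Fin n => volume.restrict S0).real
          (cellsHit (fun k => ball (gridPoint m k) r) univ n) :=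
        pcovRand_le_measureReal_cellsHit (fun k _ => gridPoint_mem_S0 k) n r
    _ ≤ ∏ k, (1 - (1 - (volume.restrict S0).real (ball (gridPoint m k) r)) ^ n) :=
        measureReal_pi_cellsHit_le _ (fun _ => measurableSet_ball)
          (pairwise_disjoint_ball_gridPoint (two_mul_le_one_div_floor_add_one hr0 hr1)) univ n
    _ ≤ ∏ k : Fin (m + 2) × Fin (m + 2),
          (1 - (1 - Real.pi * r ^ 2 * (gridWeight m k.1 * gridWeight m k.2)) ^ n) :=
        prod_le_prod (fun k _ => one_sub_one_sub_pow_nonneg measureReal_nonneg measureReal_le_one n)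
          fun k _ => one_sub_one_sub_pow_le_of_le
            (measureReal_restrict_S0_ball_gridPoint_le hr0.le k)
            (pi_mul_sq_mul_gridWeight_le_one hr0.le hr1.le k) n
    _ = _ := prod_gridWeight_mul_gridWeight (fun a => 1 - (1 - a) ^ n) _

/-- Theorem 8: upper bound on the coverage probability of the random network `g(n, r)`. -/
theorem coverage_upper_bound_random
    (n : ℕ) (hn : 1 ≤ n) (r : ℝ) (hr : r ∈ Set.Ioo (0:ℝ) (1/2)) :
    pcovRand n r ≤
      (1 - (1 - Real.pi * r ^ 2 / 4) ^ n) ^ 4 *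
      (1 - (1 - Real.pi * r ^ 2 / 2) ^ n) ^ (4 * ⌊(1 - 2*r) / (2*r)⌋₊) *
      (1 - (1 - Real.pi * r ^ 2) ^ n) ^ (⌊(1 - 2*r) / (2*r)⌋₊ ^ 2) :=
  coverage_upper_bound_random_general n r hr

end
end
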